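/- arXiv:1709.08800 — 4 statements merged into one kernel-verified Lean document; each statement's English description precedes it below -/
import Mathlib

section
/- For every V > 0, every vector w ∈ ℝ², every function f : ℝ² → ℝ², and every initial position p₀ ∈ ℝ², define the sequence p : ℕ → ℝ² by p_{n+1} = p_n + w if 2‖p_n‖ > V, and p_{n+1} = p_n + f(−2 p_n) otherwise. Then there exists a point q ∈ ℝ² such that for every n ∈ ℕ, dist(q, p_n) > V and dist(q, −p_n) > V. Hence two oblivious identical robots with limited visibility cannot explore the plane, even under a synchronous rigid scheduler. -/
/-!
Choose a unit vector `u` orthogonal to `w`. A step taken while the robots do not see each other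
adds `w`, so the coordinate `⟪u, p n⟫` can only change at a step where `2‖p n‖ ≤ V`, and there it
is at most `V / 2` in absolute value. Hence the coordinate is bounded by some `M`: either it changes
infinitely often, and then each of its values is also taken at such a step, or it is eventually
constant. The point `(M + V + 1) • u` is then farther than `V` from every `p n` and `-p n`.
-/

open Bornology Set Module
open scoped RealInnerProductSpace

theorem exists_norm_eq_one_inner_eq_zero {E : Type*} [NormedAddCommGroup E]
    [InnerProductSpace ℝ E] [FiniteDimensional ℝ E] (hE : 2 ≤ finrank ℝ E) (w : E) :
    ∃ u : E, ‖u‖ = 1 ∧ ⟪u, w⟫ = 0 := by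
  have hK : (ℝ ∙ w)ᗮ ≠ ⊥ := by
    intro h
    have hspan : finrank ℝ (ℝ ∙ w) ≤ 1 := by simpa using finrank_span_le_card ({w} : Set E)
    have := (ℝ ∙ w).finrank_add_finrank_orthogonal
    rw [h, finrank_bot] at this
    omega
  obtain ⟨v, hv, hv0⟩ := Submodule.exists_mem_ne_zero_of_ne_bot hK
  refine ⟨‖v‖⁻¹ • v, norm_smul_inv_norm hv0, ?_⟩
  rw [real_inner_smul_left, Submodule.mem_orthogonal_singleton_iff_inner_left.mp hv, mul_zero]

section

variable {α : Type*} {c : ℕ → α} {S : Set α}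

theorem mem_of_succ_add_ne
    (h : ∀ n, c (n + 1) ≠ c n → c n ∈ S) (d n : ℕ) (hd : c (n + d + 1) ≠ c (n + d)) :
    c n ∈ S := by
  induction d generalizing n with
  | zero => exact h n hd
  | succ d ih =>
    by_cases hn : c (n + 1) = c n
    · rw [← hn]
      exact ih (n + 1) (by rwa [add_right_comm n 1 d])
    · exact h n hn

theorem isBounded_range_of_succ_ne_imp_mem [Bornology α]
    (hS : IsBounded S) (h : ∀ n, c (n + 1) ≠ c n → c n ∈ S) : IsBounded (range c) := by
  by_cases hfreq : ∀ n, ∃ m ≥ n, c (m + 1) ≠ c m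
  · refine hS.subset (range_subset_iff.mpr fun n => ?_)
    obtain ⟨m, hnm, hm⟩ := hfreq n
    obtain ⟨d, rfl⟩ := Nat.exists_eq_add_of_le hnm
    exact mem_of_succ_add_ne h d n hm
  · push Not at hfreq
    obtain ⟨N, hN⟩ := hfreq
    refine ((finite_Iic N).image c).isBounded.subset (range_subset_iff.mpr fun n => ?_)
    rcases le_total n N with hn | hn
    · exact mem_image_of_mem c hn
    · refine ⟨N, mem_Iic.2 le_rfl, ?_⟩
      induction n, hn using Nat.le_induction with
      | base => rfl
      | succ m hm ih => rw [hN m hm, ih]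

end

theorem sub_abs_inner_le_dist_smul {E : Type*} [NormedAddCommGroup E] [InnerProductSpace ℝ E]
    {u : E} (hu : ‖u‖ = 1) (R : ℝ) (x : E) : R - |⟪u, x⟫| ≤ dist (R • u) x :=
  calc R - |⟪u, x⟫| ≤ R - ⟪u, x⟫ := by linarith [le_abs_self ⟪u, x⟫]
    _ = ⟪u, R • u - x⟫ := by
      rw [inner_sub_right, real_inner_smul_right, real_inner_self_eq_norm_sq, hu]; ring
    _ ≤ ‖u‖ * ‖R • u - x‖ := real_inner_le_norm _ _
    _ = dist (R • u) x := by rw [hu, one_mul, dist_eq_norm]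

theorem turingmobile_two_robots_cannot_explore_general
    (V : ℝ)
    (w : EuclideanSpace ℝ (Fin 2))
    (f : EuclideanSpace ℝ (Fin 2) → EuclideanSpace ℝ (Fin 2))
    (p : ℕ → EuclideanSpace ℝ (Fin 2))
    (hstep : ∀ n : ℕ,
      p (n + 1) = if V < 2 * ‖p n‖ then p n + w else p n + f (-((2 : ℝ) • p n))) :
    ∃ q : EuclideanSpace ℝ (Fin 2),
      ∀ n : ℕ, V < dist q (p n) ∧ V < dist q (-(p n)) := by
  obtain ⟨u, hu, huw⟩ := exists_norm_eq_one_inner_eq_zero (by simp) w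
  have hbdd : IsBounded (range fun n => ⟪u, p n⟫) := by
    refine isBounded_range_of_succ_ne_imp_mem (Metric.isBounded_closedBall (x := 0) (r := V / 2))
      fun n hmove => ?_
    have hnear : 2 * ‖p n‖ ≤ V := by
      contrapose! hmove
      simp only [hstep n, if_pos hmove, inner_add_right, huw, add_zero]
    rw [mem_closedBall_zero_iff, Real.norm_eq_abs]
    calc |⟪u, p n⟫| ≤ ‖u‖ * ‖p n‖ := abs_real_inner_le_norm u (p n)
      _ ≤ V / 2 := by rw [hu]; linarith
  obtain ⟨M, hM⟩ := hbdd.exists_norm_le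
  refine ⟨(M + V + 1) • u, fun n => ?_⟩
  have hn : |⟪u, p n⟫| ≤ M := (Real.norm_eq_abs _).symm.trans_le (hM _ (mem_range_self n))
  have hfar := sub_abs_inner_le_dist_smul hu (M + V + 1)
  constructor
  · linarith [hfar (p n)]
  · linarith [hfar (-p n), show |⟪u, -p n⟫| = |⟪u, p n⟫| by rw [inner_neg_right, abs_neg]]

/-- Two-robot case of Theorem 5: two oblivious identical robots with limited
visibility, placed symmetrically with 180°-rotated frames, cannot explore the
plane even under a synchronous rigid scheduler. The positions are `p n` and
`-(p n)`; a robot sees the other iff `2‖p n‖ ≤ V`; `w` is the move when alone,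
`f` the move as a function of the other robot's relative position `-2 • p n`. -/
theorem turingmobile_two_robots_cannot_explore
    (V : ℝ) (hV : 0 < V)
    (w : EuclideanSpace ℝ (Fin 2))
    (f : EuclideanSpace ℝ (Fin 2) → EuclideanSpace ℝ (Fin 2))
    (p₀ : EuclideanSpace ℝ (Fin 2))
    (p : ℕ → EuclideanSpace ℝ (Fin 2))
    (hp0 : p 0 = p₀)
    (hstep : ∀ n : ℕ,
      p (n + 1) = if V < 2 * ‖p n‖ then p n + w else p n + f (-((2 : ℝ) • p n))) :
    ∃ q : EuclideanSpace ℝ (Fin 2),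
      ∀ n : ℕ, V < dist q (p n) ∧ V < dist q (-(p n)) :=
  turingmobile_two_robots_cannot_explore_general V w f p hstep
end

section
/- Let u₁, u₂, u₃ be three unit vectors in ℝ² with pairwise angles of 120° (equivalently, u₁ + u₂ + u₃ = 0 and each has norm 1), and let μ > 0. Define the spiral sequence P : ℕ → ℝ² by P₀ = 0 and, for the unique j ≥ 1 with j(j−1)/2 ≤ n < j(j+1)/2, P_{n+1} = P_n + μ • u_{((j−1) mod 3)+1}. Then for every point q ∈ ℝ² there exists n ∈ ℕ with dist(q, P_n) ≤ 2μ. In particular, for any visibility radius V ≥ 2μ, every point of the plane is within distance V of some point P_n of the spiral. -/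
/-! Since `u 1 = -u 0 - u 2`, the spiral stays on the lattice `μ (ℤ u₀ + ℤ u₂)`. In coordinates
with respect to `(u₀, u₂)`, the `m`-th round of legs `3m+1, 3m+2, 3m+3` starts at `(-m, m)` and runs
along the triangle with vertices `(2m+1, m)` and `(-m-1, -2m-2)` to `(-m-1, m+1)`, the start of the
next round; these triangles cover `ℤ²`. As `u₀, u₂` are unit vectors at 120° they form a basis, and
rounding both coordinates puts every point within `μ/2 + μ/2` of a lattice point. -/

theorem abs_sub_mul_round_div_le {μ : ℝ} (hμ : 0 < μ) (x : ℝ) :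
    |x - μ * round (x / μ)| ≤ μ / 2 := by
  have h := abs_sub_round (x / μ)
  calc |x - μ * round (x / μ)| = μ * |x / μ - round (x / μ)| := by
        rw [← abs_of_pos hμ, ← abs_mul, abs_of_pos hμ, mul_sub, mul_div_cancel₀ _ hμ.ne']
    _ ≤ μ / 2 := by nlinarith

theorem exists_int_lattice_dist_le {E : Type*} [SeminormedAddCommGroup E] [NormedSpace ℝ E]
    {a b : E} (hab : Submodule.span ℝ {a, b} = ⊤) {μ : ℝ} (hμ : 0 < μ) (q : E) :
    ∃ p r : ℤ, dist q (μ • ((p : ℝ) • a + (r : ℝ) • b)) ≤ μ / 2 * (‖a‖ + ‖b‖) := by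
  obtain ⟨x, y, rfl⟩ := Submodule.mem_span_pair.mp (hab ▸ Submodule.mem_top (x := q))
  refine ⟨round (x / μ), round (y / μ), ?_⟩
  calc dist (x • a + y • b) (μ • ((round (x / μ) : ℝ) • a + (round (y / μ) : ℝ) • b))
      = ‖(x - μ * round (x / μ)) • a + (y - μ * round (y / μ)) • b‖ := by
        rw [dist_eq_norm]; congr 1; module
    _ ≤ |x - μ * round (x / μ)| * ‖a‖ + |y - μ * round (y / μ)| * ‖b‖ := by
        refine (norm_add_le _ _).trans_eq ?_
        rw [norm_smul, norm_smul, Real.norm_eq_abs, Real.norm_eq_abs]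
    _ ≤ μ / 2 * ‖a‖ + μ / 2 * ‖b‖ := by
        gcongr <;> exact abs_sub_mul_round_div_le hμ _
    _ = μ / 2 * (‖a‖ + ‖b‖) := by ring

theorem linearIndependent_pair_of_norm_eq_one {E : Type*} [NormedAddCommGroup E]
    [InnerProductSpace ℝ E] {a b : E} (ha : ‖a‖ = 1) (hb : ‖b‖ = 1) (hab : ‖a + b‖ = 1) :
    LinearIndependent ℝ ![a, b] := by
  have hinner : inner ℝ a b = -(1 / 2) := by
    have := norm_add_sq_real a b
    rw [ha, hb, hab] at this
    linarith
  refine LinearIndependent.pair_iff.mpr fun s t hst => ?_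
  have ha' := congrArg (inner ℝ a) hst
  have hb' := congrArg (inner ℝ b) hst
  simp only [inner_add_right, real_inner_smul_right, inner_zero_right,
    real_inner_self_eq_norm_sq, real_inner_comm a b, hinner, ha, hb] at ha' hb'
  constructor <;> linarith

section Spiral

variable {E : Type*} [AddCommGroup E] [Module ℝ E] {u : Fin 3 → E} {μ : ℝ} {P : ℕ → E}
    (hsum : u 0 + u 1 + u 2 = 0) (hP0 : P 0 = 0)
    (hstep : ∀ n j : ℕ, 1 ≤ j → j * (j - 1) / 2 ≤ n → n < j * (j + 1) / 2 →
      P (n + 1) = P n + μ • u ⟨(j - 1) % 3, Nat.mod_lt _ three_pos⟩)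

include hstep in
theorem spiral_leg (j : ℕ) (d : Fin 3) (hd : (j - 1) % 3 = d) (k : ℕ) (hk : k ≤ j) :
    P (j * (j - 1) / 2 + k) = P (j * (j - 1) / 2) + (k * μ) • u d := by
  induction k with
  | zero => simp
  | succ k ih =>
    have hlt : j * (j - 1) / 2 + k < j * (j + 1) / 2 := by
      have := Nat.triangle_succ j
      rw [Nat.add_sub_cancel, mul_comm] at this
      omega
    have hd' : (⟨(j - 1) % 3, Nat.mod_lt _ three_pos⟩ : Fin 3) = d := Fin.ext hd
    rw [← add_assoc, hstep _ j (by omega) (by omega) hlt, ih (by omega), hd']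
    push_cast
    module

include hstep in
theorem spiral_leg_end (j : ℕ) (d : Fin 3) (hd : (j - 1) % 3 = d) :
    P ((j + 1) * (j + 1 - 1) / 2) = P (j * (j - 1) / 2) + (j * μ) • u d := by
  rw [Nat.triangle_succ, spiral_leg hstep j d hd j le_rfl]

include hsum hP0 hstep in
theorem spiral_round_start (m : ℕ) :
    P ((3 * m + 1) * (3 * m + 1 - 1) / 2) = (m * μ) • (u 2 - u 0) := by
  induction m with
  | zero => simpa using hP0
  | succ m ih =>
    rw [show 3 * (m + 1) + 1 = 3 * m + 1 + 1 + 1 + 1 by ring,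
      spiral_leg_end hstep _ 2 (by rw [Fin.val_two]; omega),
      spiral_leg_end hstep _ 1 (by rw [Fin.val_one]; omega),
      spiral_leg_end hstep _ 0 (by rw [Fin.val_zero]; omega), ih,
      show u 1 = -u 0 - u 2 by linear_combination (norm := module) hsum]
    push_cast
    module

/-- The three families are the coordinates, with respect to `(u₀, u₂)`, of the points on the legs
`3m+1`, `3m+2`, `3m+3` of the spiral. -/
theorem exists_int_triangular_spiral_coords (p q : ℤ) :
    (∃ m k : ℕ, k ≤ 3 * m + 1 ∧ p = k - m ∧ q = m) ∨
    (∃ m k : ℕ, k ≤ 3 * m + 2 ∧ p = 2 * m + 1 - k ∧ q = m - k) ∨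
    (∃ m k : ℕ, k ≤ 3 * m + 3 ∧ p = -m - 1 ∧ q = k - 2 * m - 2) := by
  by_cases hA : 0 ≤ q ∧ -q ≤ p ∧ p ≤ 2 * q + 1
  · exact .inl ⟨q.toNat, (p + q).toNat, by omega, by omega, by omega⟩
  by_cases hB : 2 * q + 1 ≤ p ∧ q ≤ 2 * p
  · exact .inr <| .inl ⟨(p - q - 1).toNat, (p - 2 * q - 1).toNat, by omega, by omega, by omega⟩
  · exact .inr <| .inr ⟨(-p - 1).toNat, (q - 2 * p).toNat, by omega, by omega, by omega⟩

include hsum hP0 hstep in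
theorem exists_spiral_eq_lattice (p q : ℤ) : ∃ n, P n = μ • ((p : ℝ) • u 0 + (q : ℝ) • u 2) := by
  have hu1 : u 1 = -u 0 - u 2 := by linear_combination (norm := module) hsum
  have hstart := spiral_round_start hsum hP0 hstep
  have hleg₁ m := spiral_leg_end hstep (3 * m + 1) 0 (by rw [Fin.val_zero]; omega)
  have hleg₂ m := spiral_leg_end hstep (3 * m + 1 + 1) 1 (by rw [Fin.val_one]; omega)
  rcases exists_int_triangular_spiral_coords p q with
    ⟨m, k, hk, rfl, rfl⟩ | ⟨m, k, hk, rfl, rfl⟩ | ⟨m, k, hk, rfl, rfl⟩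
  · refine ⟨_, (spiral_leg hstep _ 0 (by rw [Fin.val_zero]; omega) k hk).trans ?_⟩
    rw [hstart]; push_cast; module
  · refine ⟨_, (spiral_leg hstep (3 * m + 1 + 1) 1 (by rw [Fin.val_one]; omega) k
      (by omega)).trans ?_⟩
    rw [hleg₁, hstart, hu1]; push_cast; module
  · refine ⟨_, (spiral_leg hstep (3 * m + 1 + 1 + 1) 2 (by rw [Fin.val_two]; omega) k
      (by omega)).trans ?_⟩
    rw [hleg₂, hleg₁, hstart, hu1]; push_cast; module

end Spiral

/-- Geometric core of Theorem 4: the triangular spiral traced by a basic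
TuringMobile (steps of length `μ` in three directions 120° apart, making `j`
consecutive steps in the `(((j-1) mod 3)+1)`-th direction on the `j`-th leg)
passes within distance `2μ` of every point of the plane. -/
theorem turingmobile_spiral_explores_plane
    (u : Fin 3 → EuclideanSpace ℝ (Fin 2))
    (hu : ∀ i, ‖u i‖ = 1) (hsum : u 0 + u 1 + u 2 = 0)
    (μ : ℝ) (hμ : 0 < μ)
    (P : ℕ → EuclideanSpace ℝ (Fin 2)) (hP0 : P 0 = 0)
    (hstep : ∀ n j : ℕ, 1 ≤ j → j * (j - 1) / 2 ≤ n → n < j * (j + 1) / 2 →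
      P (n + 1) = P n + μ • u ⟨(j - 1) % 3, by omega⟩) :
    (∀ q : EuclideanSpace ℝ (Fin 2), ∃ n : ℕ, dist q (P n) ≤ 2 * μ) ∧
    (∀ V : ℝ, 2 * μ ≤ V →
      ∀ q : EuclideanSpace ℝ (Fin 2), ∃ n : ℕ, dist q (P n) ≤ V) := by
  have hu02 : ‖u 0 + u 2‖ = 1 := by
    rw [show u 0 + u 2 = -u 1 by linear_combination (norm := module) hsum, norm_neg, hu 1]
  have hspan : Submodule.span ℝ {u 0, u 2} = ⊤ := by
    rw [← Matrix.range_cons_cons_empty _ _ ![]]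
    exact (linearIndependent_pair_of_norm_eq_one (hu 0) (hu 2) hu02).span_eq_top_of_card_eq_finrank'
      (by simp)
  have hnear (q : EuclideanSpace ℝ (Fin 2)) : ∃ n, dist q (P n) ≤ 2 * μ := by
    obtain ⟨p, r, hpr⟩ := exists_int_lattice_dist_le hspan hμ q
    obtain ⟨n, hn⟩ := exists_spiral_eq_lattice hsum hP0 hstep p r
    refine ⟨n, hn ▸ hpr.trans ?_⟩
    rw [hu 0, hu 2]
    linarith
  exact ⟨hnear, fun V hV q => (hnear q).imp fun n hn => hn.trans hV⟩
end

section
/- Let d, μ, L ∈ ℝ with d > 0, μ > 0, and L > d. In ℝ² let R = (0, 0), C′ = (0, d), N′ = (L, 0), and let v = μ • (√3/2, −1/2). Set C = C′ + v and, for t ∈ [0, 1], N = N′ + t • v. Then ⟪C − R, N − R⟫ > 0; that is, the angle ∠NRC is strictly less than 90°. -/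
open scoped RealInnerProductSpace

/-- The point of `ℝ² = EuclideanSpace ℝ (Fin 2)` with coordinates `(x, y)`. -/
def pt (x y : ℝ) : EuclideanSpace ℝ (Fin 2) := WithLp.toLp 2 ![x, y]

/-!
Because `C′ ⟂ N′`, expanding gives
`⟪C′ + v, N′ + t • v⟫ = (1 - t) ⟪v, N′⟫ + t (⟪C′, v⟫ + ⟪v, N′⟫) + t ‖v‖²`.
The first two terms form a convex combination of `⟪v, N′⟫ = (√3/2) μ L > 0` and
`⟪C′, v⟫ + ⟪v, N′⟫ = μ ((√3/2) L - d/2) > 0`, and the last term is nonnegative.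
-/

theorem inner_add_add_smul_pos_of_inner_eq_zero {E : Type*} [NormedAddCommGroup E]
    [InnerProductSpace ℝ E] {x y v : E} {t : ℝ} (hxy : ⟪x, y⟫ = 0) (hvy : 0 < ⟪v, y⟫)
    (hxvy : 0 < ⟪x, v⟫ + ⟪v, y⟫) (ht : t ∈ Set.Icc (0 : ℝ) 1) :
    0 < ⟪x + v, y + t • v⟫ := by
  obtain ⟨ht0, ht1⟩ := ht
  have hexpand : ⟪x + v, y + t • v⟫ =
      ((1 - t) * ⟪v, y⟫ + t * (⟪x, v⟫ + ⟪v, y⟫)) + t * ‖v‖ ^ 2 := by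
    rw [inner_add_left, inner_add_right, inner_add_right, inner_smul_right, inner_smul_right,
      hxy, real_inner_self_eq_norm_sq]
    ring
  have hconvex : 0 < (1 - t) * ⟪v, y⟫ + t * (⟪x, v⟫ + ⟪v, y⟫) := by
    rcases ht0.eq_or_lt with rfl | ht0
    · simpa using hvy
    · nlinarith [mul_nonneg (sub_nonneg.2 ht1) hvy.le, mul_pos ht0 hxvy]
  rw [hexpand]
  positivity

theorem pt_zero : pt 0 0 = 0 := by
  ext i
  fin_cases i <;> rfl

theorem inner_pt (a b c e : ℝ) : ⟪pt a b, pt c e⟫ = a * c + b * e := by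
  simp [pt, PiLp.inner_apply, Fin.sum_univ_two, mul_comm]

/-- Phase-4 claim for destination `D₃` (Figure 5): with `R` at the origin,
`C′ = (0, d)`, `N′ = (L, 0)` with `L > d`, after the Commander moves by
`v = μ • (√3/2, −1/2)` to `C = C′ + v`, at every intermediate position
`N = N′ + t • v` (`t ∈ [0,1]`) of the Number robot the angle `∠NRC` stays
acute, i.e. `⟪C − R, N − R⟫ > 0`. -/
theorem turingmobile_phase4_angle_acute
    (d μ L : ℝ) (hd : 0 < d) (hμ : 0 < μ) (hL : d < L)
    (R C' N' v C : EuclideanSpace ℝ (Fin 2))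
    (hR : R = pt 0 0) (hC' : C' = pt 0 d) (hN' : N' = pt L 0)
    (hv : v = μ • pt (Real.sqrt 3 / 2) (-(1 / 2)))
    (hC : C = C' + v) :
    ∀ t ∈ Set.Icc (0 : ℝ) 1, ∀ N : EuclideanSpace ℝ (Fin 2),
      N = N' + t • v → 0 < ⟪C - R, N - R⟫ := by
  rintro t ht N rfl
  subst hR hC' hN' hv hC
  have hsqrt3 : 1 < Real.sqrt 3 := by
    rw [Real.lt_sqrt zero_le_one]
    norm_num
  have hL0 : 0 < L := hd.trans hL
  rw [pt_zero, sub_zero, sub_zero]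
  refine inner_add_add_smul_pos_of_inner_eq_zero (by simp [inner_pt]) ?_ ?_ ht
  · rw [real_inner_smul_left, inner_pt]
    positivity
  · rw [real_inner_smul_left, real_inner_smul_right, inner_pt, inner_pt, ← mul_add]
    refine mul_pos hμ ?_
    nlinarith
end

section
/- Let d, μ ∈ ℝ with 0 < 2μ < d, and let C, R′, P ∈ ℝ² satisfy dist(C, P) = d, dist(R′, P) = μ, and dist(C, R′) = √(d² − dμ + μ²). Then the function t ↦ dist(C, R′ + t • (P − R′)) is strictly increasing on [0, 1]; in particular, for every t ∈ (0, 1), √(d² − dμ + μ²) < dist(C, R′ + t • (P − R′)) < d. -/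
open RealInnerProductSpace


/-- Phase-5 monotonicity claim: as the Reference robot moves along the segment
from `R′` to its destination `P` (of length `μ`, ending at distance `d` from
the Commander `C`, starting at distance `d′ = √(d² − dμ + μ²)` from `C`), its
distance from `C` strictly increases; in particular it stays strictly between
`d′` and `d`, never again attaining the trigger values. -/
theorem turingmobile_phase5_distance_increasing
    (d μ : ℝ) (hμ : 0 < 2 * μ) (hμd : 2 * μ < d)
    (C R' P : EuclideanSpace ℝ (Fin 2))
    (hCP : dist C P = d) (hR'P : dist R' P = μ)
    (hCR' : dist C R' = Real.sqrt (d ^ 2 - d * μ + μ ^ 2)) :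
    StrictMonoOn (fun t : ℝ => dist C (R' + t • (P - R'))) (Set.Icc 0 1) ∧
    ∀ t ∈ Set.Ioo (0 : ℝ) 1,
      Real.sqrt (d ^ 2 - d * μ + μ ^ 2) < dist C (R' + t • (P - R')) ∧
      dist C (R' + t • (P - R')) < d := by
  have hμ0 : 0 < μ := by linarith
  have hd0 : 0 < d := by linarith
  set u : EuclideanSpace ℝ (Fin 2) := C - R' with hu
  set v : EuclideanSpace ℝ (Fin 2) := P - R' with hv
  have hvnorm : ‖v‖ = μ := by
    rw [hv, ← dist_eq_norm, dist_comm]; exact hR'P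
  have huv : ‖u - v‖ = d := by
    have : u - v = C - P := by rw [hu, hv]; abel
    rw [this, ← dist_eq_norm]; exact hCP
  have hexpr : (0:ℝ) ≤ d ^ 2 - d * μ + μ ^ 2 := by nlinarith
  have hunorm2 : ‖u‖ ^ 2 = d ^ 2 - d * μ + μ ^ 2 := by
    have h1 : ‖u‖ = Real.sqrt (d ^ 2 - d * μ + μ ^ 2) := by
      rw [hu, ← dist_eq_norm]; exact hCR'
    rw [h1, Real.sq_sqrt hexpr]
  have hinner : ⟪u, v⟫ = μ ^ 2 - d * μ / 2 := by
    have h2 : ‖u - v‖ ^ 2 = ‖u‖ ^ 2 - 2 * ⟪u, v⟫ + ‖v‖ ^ 2 := norm_sub_sq_real u v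
    rw [huv, hunorm2, hvnorm] at h2
    linarith
  have key : ∀ t : ℝ, dist C (R' + t • (P - R')) ^ 2
      = (d ^ 2 - d * μ + μ ^ 2) + t * (d * μ - 2 * μ ^ 2) + t ^ 2 * μ ^ 2 := by
    intro t
    have heq : C - (R' + t • (P - R')) = u - t • v := by rw [hu, hv]; abel
    rw [dist_eq_norm, heq, norm_sub_sq_real, real_inner_smul_right, norm_smul,
      hunorm2, hvnorm, hinner]
    rw [Real.norm_eq_abs, mul_pow, sq_abs]
    ring
  have hmono : StrictMonoOn (fun t : ℝ => dist C (R' + t • (P - R'))) (Set.Icc 0 1) := by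
    intro s hs t ht hst
    have hs0 : 0 ≤ s := hs.1
    have hsq : dist C (R' + s • (P - R')) ^ 2 < dist C (R' + t • (P - R')) ^ 2 := by
      rw [key s, key t]
      nlinarith [sq_nonneg μ, mul_pos hμ0 (show (0:ℝ) < d - 2*μ by linarith), mul_nonneg (mul_nonneg (sub_pos.2 hst).le (by linarith [hs.1, ht.1] : (0:ℝ) ≤ t + s)) (sq_nonneg μ), mul_pos (sub_pos.2 hst) (mul_pos hμ0 (show (0:ℝ) < d - 2*μ by linarith))]
    exact lt_of_pow_lt_pow_left₀ 2 dist_nonneg hsq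
  refine ⟨hmono, fun t ht => ?_⟩
  have h0 : dist C (R' + (0:ℝ) • (P - R')) = Real.sqrt (d ^ 2 - d * μ + μ ^ 2) := by
    simp [hCR']
  have h1 : dist C (R' + (1:ℝ) • (P - R')) = d := by
    have : R' + (1:ℝ) • (P - R') = P := by simp
    rw [this, hCP]
  constructor
  · rw [← h0]
    exact hmono ⟨le_refl 0, zero_le_one⟩ ⟨ht.1.le, ht.2.le⟩ ht.1
  · rw [← h1]
    exact hmono ⟨ht.1.le, ht.2.le⟩ ⟨zero_le_one, le_refl 1⟩ ht.2
end
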